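/- Let P be a continuous L-ordered set. Then for every y ∈ P, the L-subset ↑y (defined by ↑y(x) = e(y,x)) is a super-compact L-subset of the Scott space (P, σ_L(P)); consequently (P, σ_L(P)) is locally super-compact. -/

import Mathlib

open scoped Classical

namespace FuzzyPaper

variable {L : Type*} [Order.Frame L]

/-- The inclusion L-order on L-subsets: sub(A,B) = ⨅ x, A x ⇨ B x. -/
def subF {X : Type*} (A B : X → L) : L := ⨅ x, A x ⇨ B x

/-- `e` is an L-order: reflexivity, transitivity, antisymmetry. -/
def IsLOrder {P : Type*} (e : P → P → L) : Prop :=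
  (∀ x, e x x = ⊤) ∧ (∀ x y z, e x y ⊓ e y z ≤ e x z) ∧
  (∀ x y, e x y ⊓ e y x = ⊤ → x = y)

/-- `D` is a directed L-subset of `(P, e)`. -/
def IsDirectedL {P : Type*} (e : P → P → L) (D : P → L) : Prop :=
  (⨆ x, D x) = ⊤ ∧ ∀ x y, D x ⊓ D y ≤ ⨆ z, D z ⊓ e x z ⊓ e y z

/-- `x` is a supremum of the L-subset `A`: e(x,y) = sub(A, ↓y) for all y. -/
def IsSupOf {P : Type*} (e : P → P → L) (A : P → L) (x : P) : Prop :=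
  ∀ y, e x y = ⨅ z, A z ⇨ e z y

/-- The fuzzy way-below L-subset ⇓x :
⇓x(y) = ⨅_{D directed with a supremum s} (e(x,s) ⇨ ⨆ d, D d ⊓ e(y,d)). -/
def dwb {P : Type*} (e : P → P → L) (x : P) : P → L := fun y =>
  ⨅ Ds : {Ds : (P → L) × P // IsDirectedL e Ds.1 ∧ IsSupOf e Ds.1 Ds.2},
    e x Ds.1.2 ⇨ ⨆ d, Ds.1.1 d ⊓ e y d

/-- A continuous L-ordered set: ⇓x is directed with supremum x, for each x. -/
def IsContinuousLOrder {P : Type*} (e : P → P → L) : Prop :=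
  IsLOrder e ∧ ∀ x, IsDirectedL e (dwb e x) ∧ IsSupOf e (dwb e x) x

/-- An L-dcpo: every directed L-subset has a supremum. -/
def IsLDcpo {P : Type*} (e : P → P → L) : Prop :=
  IsLOrder e ∧ ∀ D, IsDirectedL e D → ∃ x, IsSupOf e D x

/-- A continuous L-dcpo. -/
def IsContinuousLDcpo {P : Type*} (e : P → P → L) : Prop :=
  IsLDcpo e ∧ ∀ x, IsDirectedL e (dwb e x) ∧ IsSupOf e (dwb e x) x

/-- Scott open L-subsets: upper sets inaccessible by directed suprema. -/
def IsScottOpen {P : Type*} (e : P → P → L) (A : P → L) : Prop :=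
  (∀ x y, A x ⊓ e x y ≤ A y) ∧
  ∀ D s, IsDirectedL e D → IsSupOf e D s → A s = ⨆ x, A x ⊓ D x

/-- The Scott L-topology. -/
def scottOpens {P : Type*} (e : P → P → L) : Set (P → L) := {A | IsScottOpen e A}

/-- `𝒪` is a (stratified) L-topology on X. -/
def IsLTop {X : Type*} (𝒪 : Set (X → L)) : Prop :=
  (∀ A ∈ 𝒪, ∀ B ∈ 𝒪, A ⊓ B ∈ 𝒪) ∧ (∀ S ⊆ 𝒪, sSup S ∈ 𝒪) ∧
  (∀ a : L, (fun _ => a) ∈ 𝒪)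

/-- T₀ separation. -/
def IsT0 {X : Type*} (𝒪 : Set (X → L)) : Prop :=
  ∀ x y : X, (∀ A ∈ 𝒪, A x = A y) → x = y

/-- The specialization L-order of an L-topological space. -/
def specE {X : Type*} (𝒪 : Set (X → L)) : X → X → L := fun x y =>
  ⨅ A : 𝒪, (A : X → L) x ⇨ (A : X → L) y

/-- A point of 𝒪(X): preserves binary meets, arbitrary joins and constants. -/
def IsPoint {X : Type*} (𝒪 : Set (X → L)) (p : 𝒪 → L) : Prop :=
  (∀ A B C : 𝒪, (C : X → L) = (A : X → L) ⊓ (B : X → L) → p C = p A ⊓ p B) ∧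
  (∀ (S : Set 𝒪) (C : 𝒪), (C : X → L) = sSup (Subtype.val '' S) →
    p C = ⨆ A ∈ S, p A) ∧
  (∀ (a : L) (C : 𝒪), (C : X → L) = (fun _ => a) → p C = a)

/-- The inclusion L-order on maps 𝒪 → L (in particular on points). -/
def subPt {X : Type*} (𝒪 : Set (X → L)) (p q : 𝒪 → L) : L := ⨅ A, p A ⇨ q A

/-- η : x ↦ [x], where [x](A) = A(x). -/
def etaPt {X : Type*} (𝒪 : Set (X → L)) (x : X) : 𝒪 → L := fun A => (A : X → L) x

/-- L-sobriety: η is a bijection onto the set of points. -/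
def IsSober {X : Type*} (𝒪 : Set (X → L)) : Prop :=
  (∀ x y : X, etaPt 𝒪 x = etaPt 𝒪 y → x = y) ∧
  (∀ p : 𝒪 → L, IsPoint 𝒪 p → ∃ x, p = etaPt 𝒪 x)

/-- Super-compact L-subsets. -/
def IsSuperCompact {X : Type*} (𝒪 : Set (X → L)) (A : X → L) : Prop :=
  (⨆ x, A x) = ⊤ ∧ ∀ S ⊆ 𝒪, subF A (sSup S) = ⨆ V ∈ S, subF A V

/-- Interior operator. -/
def interiorF {X : Type*} (𝒪 : Set (X → L)) (A : X → L) : X → L :=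
  sSup {B ∈ 𝒪 | B ≤ A}

/-- Locally super-compact L-topological spaces. -/
def IsLocallySC {X : Type*} (𝒪 : Set (X → L)) : Prop :=
  ∀ A ∈ 𝒪, A = fun x => ⨆ B ∈ {B | IsSuperCompact 𝒪 B}, subF B A ⊓ interiorF 𝒪 B x

/-- `ℬ` is a base of the L-topology `𝒪`. -/
def IsBase {X : Type*} (𝒪 : Set (X → L)) (ℬ : Set (X → L)) : Prop :=
  ℬ ⊆ 𝒪 ∧ ∀ A ∈ 𝒪, A = fun x => ⨆ B ∈ ℬ, subF B A ⊓ B x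

/-- Strong locally super-compact: a base of super-compact open sets. -/
def IsStrongLocallySC {X : Type*} (𝒪 : Set (X → L)) : Prop :=
  ∃ ℬ, IsBase 𝒪 ℬ ∧ ∀ B ∈ ℬ, IsSuperCompact 𝒪 B

/-- Continuity of maps of L-topological spaces. -/
def LCont {X Y : Type*} (𝒪X : Set (X → L)) (𝒪Y : Set (Y → L)) (f : X → Y) : Prop :=
  ∀ B ∈ 𝒪Y, (B ∘ f) ∈ 𝒪X

/-- k(x)(y) = e(y,x) if y is compact (⇓y(y) = ⊤), and ⊥ otherwise. -/
noncomputable def kfun {P : Type*} (e : P → P → L) (x : P) : P → L := fun y =>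
  if dwb e y y = ⊤ then e y x else ⊥

/-- Algebraic L-dcpo. -/
def IsAlgebraicLDcpo {P : Type*} (e : P → P → L) : Prop :=
  IsLDcpo e ∧ ∀ x, IsDirectedL e (kfun e x) ∧ IsSupOf e (kfun e x) x

/-- Quasihomeomorphism: f^← : 𝒪Y → 𝒪X is a bijection. -/
def IsQuasiHomeo {X Y : Type*} (𝒪X : Set (X → L)) (𝒪Y : Set (Y → L)) (f : X → Y) : Prop :=
  LCont 𝒪X 𝒪Y f ∧ (∀ A ∈ 𝒪X, ∃ B ∈ 𝒪Y, B ∘ f = A) ∧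
  (∀ B₁ ∈ 𝒪Y, ∀ B₂ ∈ 𝒪Y, B₁ ∘ f = B₂ ∘ f → B₁ = B₂)

/-- Subspace embedding of L-topological spaces. -/
def IsEmbeddingL {X Y : Type*} (𝒪X : Set (X → L)) (𝒪Y : Set (Y → L)) (f : X → Y) : Prop :=
  Function.Injective f ∧ 𝒪X = {A | ∃ B ∈ 𝒪Y, B ∘ f = A}

/-- Strict embedding: a quasihomeomorphism which is a subspace embedding. -/
def IsStrictEmbedding {X Y : Type*} (𝒪X : Set (X → L)) (𝒪Y : Set (Y → L)) (f : X → Y) : Prop :=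
  IsEmbeddingL 𝒪X 𝒪Y f ∧ IsQuasiHomeo 𝒪X 𝒪Y f

/-- L-sobrification: universal L-sober space over X. -/
def IsSobrification {X Y : Type*} (𝒪X : Set (X → L)) (𝒪Y : Set (Y → L)) (j : X → Y) : Prop :=
  IsLTop 𝒪Y ∧ IsSober 𝒪Y ∧ LCont 𝒪X 𝒪Y j ∧
  ∀ (Z : Type*) (𝒪Z : Set (Z → L)), IsLTop 𝒪Z → IsSober 𝒪Z →
    ∀ f : X → Z, LCont 𝒪X 𝒪Z f →
      ∃! g : Y → Z, LCont 𝒪Y 𝒪Z g ∧ f = g ∘ j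


/-!
By the Yoneda lemma, `sub(↑y, A) = A(y)` for every upper set `A`, so super-compactness of `↑y`
reduces to joins of open sets being computed pointwise. For a Scott open `A`, applying Scott
openness to the directed set `⇓x` with supremum `x` gives `A(x) = ⋁_y A(y) ∧ ⇓x(y)`, and
`⇓x(y) = ⇑y(x)` lies below the interior of `↑y` since `⇑y` is Scott open, by interpolation.
-/

section Scott

variable {P : Type*} {e : P → P → L}

lemma subF_inf_le {X : Type*} (A B : X → L) (x : X) : subF A B ⊓ A x ≤ B x :=
  le_himp_iff.1 (iInf_le _ x)

lemma subF_mono_right {X : Type*} (A : X → L) {B C : X → L} (h : B ≤ C) :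
    subF A B ≤ subF A C :=
  iInf_mono fun x => himp_le_himp_left (h x)

lemma interiorF_le {X : Type*} (𝒪 : Set (X → L)) (A : X → L) : interiorF 𝒪 A ≤ A :=
  sSup_le fun _ hB => hB.2

lemma le_interiorF {X : Type*} {𝒪 : Set (X → L)} {A B : X → L} (hB : B ∈ 𝒪) (hBA : B ≤ A) :
    B ≤ interiorF 𝒪 A :=
  le_sSup ⟨hB, hBA⟩

lemma le_of_isSupOf (hrefl : ∀ x, e x x = ⊤) {D : P → L} {s : P} (hs : IsSupOf e D s)
    (z : P) : D z ≤ e z s := by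
  have h : (⊤ : L) ≤ D z ⇨ e z s := ((hrefl s).symm.trans (hs s)).le.trans (iInf_le _ z)
  simpa using h

lemma isDirectedL_principal_down (hrefl : ∀ x, e x x = ⊤) (x : P) :
    IsDirectedL e (fun z => e z x) :=
  ⟨top_unique (le_iSup_of_le x (hrefl x).ge),
    fun _ _ => le_iSup_of_le x (by simp [hrefl x])⟩

lemma isSupOf_principal_down (hrefl : ∀ x, e x x = ⊤)
    (htrans : ∀ x y z, e x y ⊓ e y z ≤ e x z) (x : P) :
    IsSupOf e (fun z => e z x) x := fun t =>
  le_antisymm (le_iInf fun z => le_himp_iff'.2 (htrans z x t))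
    ((iInf_le _ x).trans (by simp [hrefl x]))

/-- `⇓x ≤ ↓x`, tested on the directed set `↓x` itself. -/
lemma dwb_le (hrefl : ∀ x, e x x = ⊤) (htrans : ∀ x y z, e x y ⊓ e y z ≤ e x z)
    (x y : P) : dwb e x y ≤ e y x := by
  refine (iInf_le _ ⟨(fun z => e z x, x),
    isDirectedL_principal_down hrefl x, isSupOf_principal_down hrefl htrans x⟩).trans ?_
  show e x x ⇨ (⨆ d, e d x ⊓ e y d) ≤ _
  rw [hrefl x, top_himp]
  exact iSup_le fun d => le_of_eq_of_le (inf_comm _ _) (htrans y d x)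

lemma dwb_inf_le_dwb_of_le (htrans : ∀ x y z, e x y ⊓ e y z ≤ e x z) (x x' y : P) :
    dwb e x y ⊓ e x x' ≤ dwb e x' y := by
  refine le_iInf fun Ds => le_himp_iff.2 ?_
  calc dwb e x y ⊓ e x x' ⊓ e x' Ds.1.2
      ≤ dwb e x y ⊓ e x Ds.1.2 := by
        rw [inf_assoc]; exact inf_le_inf_left _ (htrans x x' _)
    _ ≤ _ := le_himp_iff.1 (iInf_le _ Ds)

lemma dwb_inf_le_dwb_of_ge (htrans : ∀ x y z, e x y ⊓ e y z ≤ e x z) (x d y : P) :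
    dwb e x d ⊓ e y d ≤ dwb e x y := by
  refine le_iInf fun Ds => le_himp_iff.2 ?_
  calc dwb e x d ⊓ e y d ⊓ e x Ds.1.2
      ≤ (⨆ d', Ds.1.1 d' ⊓ e d d') ⊓ e y d := by
        rw [inf_right_comm]
        exact inf_le_inf_right _ (le_himp_iff.1 (iInf_le _ Ds))
    _ = ⨆ d', Ds.1.1 d' ⊓ (e y d ⊓ e d d') := by
        rw [iSup_inf_eq]; exact iSup_congr fun _ => by ac_rfl
    _ ≤ _ := iSup_mono fun d' => inf_le_inf_left _ (htrans y d d')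

/-- `⋁ₓ D(x) ∧ ⇓x`: refining a directed `D` this way keeps it directed with the same supremum
(interpolation), which is what makes `⇑y` Scott open. -/
def wayBelowUnion (e : P → P → L) (D : P → L) : P → L := fun d => ⨆ x, D x ⊓ dwb e x d

lemma isDirectedL_wayBelowUnion (htrans : ∀ x y z, e x y ⊓ e y z ≤ e x z)
    (hcont : ∀ x, IsDirectedL e (dwb e x) ∧ IsSupOf e (dwb e x) x)
    {D : P → L} (hD : IsDirectedL e D) : IsDirectedL e (wayBelowUnion e D) := by
  set E := wayBelowUnion e D
  have hE : ∀ u a b, D u ⊓ (dwb e u a ⊓ dwb e u b) ≤ ⨆ z, E z ⊓ e a z ⊓ e b z := by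
    intro u a b
    calc D u ⊓ (dwb e u a ⊓ dwb e u b)
        ≤ D u ⊓ ⨆ z, dwb e u z ⊓ e a z ⊓ e b z := inf_le_inf_left _ ((hcont u).1.2 a b)
      _ = ⨆ z, (D u ⊓ dwb e u z) ⊓ e a z ⊓ e b z := by
        rw [inf_iSup_eq]; exact iSup_congr fun _ => by ac_rfl
      _ ≤ _ := iSup_mono fun z =>
        inf_le_inf_right _ (inf_le_inf_right _ (le_iSup (fun x => D x ⊓ dwb e x z) u))
  refine ⟨?_, fun a b => ?_⟩
  · calc (⨆ d, E d) = ⨆ x, D x ⊓ ⨆ d, dwb e x d := by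
          simp only [E, wayBelowUnion, inf_iSup_eq]; exact iSup_comm
      _ = ⊤ := by simp only [(hcont _).1.1, inf_top_eq, hD.1]
  show (⨆ x, D x ⊓ dwb e x a) ⊓ (⨆ x, D x ⊓ dwb e x b) ≤ ⨆ z, E z ⊓ e a z ⊓ e b z
  rw [iSup_inf_eq]
  refine iSup_le fun x => ?_
  rw [inf_iSup_eq]
  refine iSup_le fun x' => ?_
  calc D x ⊓ dwb e x a ⊓ (D x' ⊓ dwb e x' b)
      = (D x ⊓ D x') ⊓ (dwb e x a ⊓ dwb e x' b) := by ac_rfl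
    _ ≤ (⨆ u, D u ⊓ e x u ⊓ e x' u) ⊓ (dwb e x a ⊓ dwb e x' b) :=
        inf_le_inf_right _ (hD.2 x x')
    _ = ⨆ u, D u ⊓ ((dwb e x a ⊓ e x u) ⊓ (dwb e x' b ⊓ e x' u)) := by
        rw [iSup_inf_eq]; exact iSup_congr fun _ => by ac_rfl
    _ ≤ ⨆ u, D u ⊓ (dwb e u a ⊓ dwb e u b) := iSup_mono fun u => inf_le_inf_left _
        (inf_le_inf (dwb_inf_le_dwb_of_le htrans x u a) (dwb_inf_le_dwb_of_le htrans x' u b))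
    _ ≤ _ := iSup_le fun u => hE u a b

lemma isSupOf_wayBelowUnion (hcont : ∀ x, IsDirectedL e (dwb e x) ∧ IsSupOf e (dwb e x) x)
    {D : P → L} {s : P} (hs : IsSupOf e D s) : IsSupOf e (wayBelowUnion e D) s := by
  intro t
  calc e s t = ⨅ x, D x ⇨ ⨅ z, dwb e x z ⇨ e z t := by
        rw [hs t]; exact iInf_congr fun x => by rw [(hcont x).2 t]
    _ = ⨅ z, wayBelowUnion e D z ⇨ e z t := by
        simp only [wayBelowUnion, iSup_himp_eq, himp_iInf_eq, himp_himp]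
        exact iInf_comm

/-- `x ↦ dwb e x y` is `⇑y`. -/
lemma isScottOpen_dwb (hrefl : ∀ x, e x x = ⊤) (htrans : ∀ x y z, e x y ⊓ e y z ≤ e x z)
    (hcont : ∀ x, IsDirectedL e (dwb e x) ∧ IsSupOf e (dwb e x) x) (y : P) :
    IsScottOpen e (fun x => dwb e x y) := by
  refine ⟨fun x x' => dwb_inf_le_dwb_of_le htrans x x' y, fun D s hD hs => le_antisymm ?_ ?_⟩
  · refine (iInf_le _ ⟨(wayBelowUnion e D, s), isDirectedL_wayBelowUnion htrans hcont hD,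
      isSupOf_wayBelowUnion hcont hs⟩).trans ?_
    show e s s ⇨ (⨆ d, wayBelowUnion e D d ⊓ e y d) ≤ _
    rw [hrefl s, top_himp]
    simp only [wayBelowUnion, iSup_inf_eq]
    refine iSup₂_le fun d x => le_iSup_of_le x ?_
    calc D x ⊓ dwb e x d ⊓ e y d = D x ⊓ (dwb e x d ⊓ e y d) := inf_assoc ..
      _ ≤ D x ⊓ dwb e x y := inf_le_inf_left _ (dwb_inf_le_dwb_of_ge htrans x d y)
      _ = dwb e x y ⊓ D x := inf_comm ..
  · refine iSup_le fun x => ?_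
    calc dwb e x y ⊓ D x ≤ dwb e x y ⊓ e x s := inf_le_inf_left _ (le_of_isSupOf hrefl hs x)
      _ ≤ dwb e s y := dwb_inf_le_dwb_of_le htrans x s y

lemma subF_principal_up_le (hrefl : ∀ x, e x x = ⊤) (A : P → L) (y : P) :
    subF (fun x => e y x) A ≤ A y :=
  (iInf_le _ y).trans (by simp [hrefl y])

/-- Yoneda lemma for L-orders. -/
lemma subF_principal_up (hrefl : ∀ x, e x x = ⊤) {A : P → L}
    (hA : ∀ x z, A x ⊓ e x z ≤ A z) (y : P) :
    subF (fun x => e y x) A = A y :=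
  le_antisymm (subF_principal_up_le hrefl A y) (le_iInf fun x => le_himp_iff.2 (hA y x))

lemma isSuperCompact_principal_up (hrefl : ∀ x, e x x = ⊤) (y : P) :
    IsSuperCompact (scottOpens e) (fun x => e y x) := by
  refine ⟨top_unique (le_iSup_of_le y (hrefl y).ge), fun S hS => le_antisymm ?_ ?_⟩
  · calc subF (fun x => e y x) (sSup S) ≤ sSup S y := subF_principal_up_le hrefl _ y
      _ = ⨆ V ∈ S, V y := by rw [sSup_apply, iSup_subtype]
      _ = ⨆ V ∈ S, subF (fun x => e y x) V :=
        iSup_congr fun V => iSup_congr fun hV => (subF_principal_up hrefl (hS hV).1 y).symm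
  · exact iSup₂_le fun V hV => subF_mono_right _ (le_sSup hV)

lemma scottOpen_eq_iSup_inf_dwb (hcont : ∀ x, IsDirectedL e (dwb e x) ∧ IsSupOf e (dwb e x) x)
    {A : P → L} (hA : IsScottOpen e A) (x : P) : A x = ⨆ y, A y ⊓ dwb e x y :=
  hA.2 _ x (hcont x).1 (hcont x).2

lemma isLocallySC_scottOpens (hrefl : ∀ x, e x x = ⊤)
    (htrans : ∀ x y z, e x y ⊓ e y z ≤ e x z)
    (hcont : ∀ x, IsDirectedL e (dwb e x) ∧ IsSupOf e (dwb e x) x) :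
    IsLocallySC (scottOpens e) := by
  intro A hA
  funext x
  refine le_antisymm ?_ (iSup₂_le fun B _ =>
    (inf_le_inf_left _ (interiorF_le _ B x)).trans (subF_inf_le B A x))
  rw [scottOpen_eq_iSup_inf_dwb hcont hA x]
  refine iSup_le fun y => le_iSup₂_of_le (fun z => e y z) (isSuperCompact_principal_up hrefl y)
    (inf_le_inf (subF_principal_up hrefl hA.1 y).ge ?_)
  exact le_interiorF (𝒪 := scottOpens e) (isScottOpen_dwb hrefl htrans hcont y)
    (fun z => dwb_le hrefl htrans z y) x

end Scott

/-- For a continuous L-ordered set P, each ↑y is super-compact in (P, σ_L(P)),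
and the Scott space is locally super-compact. -/
theorem stmt11 {P : Type*} (e : P → P → L) (he : IsContinuousLOrder e) :
    (∀ y : P, IsSuperCompact (scottOpens e) (fun x => e y x)) ∧
    IsLocallySC (scottOpens e) := by
  obtain ⟨⟨hrefl, htrans, -⟩, hcont⟩ := he
  exact ⟨isSuperCompact_principal_up hrefl, isLocallySC_scottOpens hrefl htrans hcont⟩

end FuzzyPaper
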